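/- arXiv:math/0510315 — 8 statements merged into one kernel-verified Lean document; each statement's English description precedes it below -/
import Mathlib

section
/- For M > 0, the function λ ↦ r(λ) = [3M(λ²-1) + M√(9(λ²-1)² + 32λ²)]/(2λ²) (defined for λ > 0, with value 8M/3 at λ = 0 by continuity) takes values in the interval [8M/3, 3M] for all λ ≥ 0. -/
/-- For `M > 0`, the critical point `r(λ)` of the Schwarzschild potential lies in
the interval `[8M/3, 3M]` for all `λ ≥ 0`. -/
theorem root_in_interval (M : ℝ) (hM : 0 < M) :
    ∀ lam : ℝ, 0 ≤ lam →
      (if lam = 0 then 8 * M / 3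
        else (3 * M * (lam ^ 2 - 1) +
          M * Real.sqrt (9 * (lam ^ 2 - 1) ^ 2 + 32 * lam ^ 2)) / (2 * lam ^ 2))
        ∈ Set.Icc (8 * M / 3) (3 * M) := by
  intro lam hlam
  by_cases h : lam = 0
  · simp [h]
    linarith
  · simp only [h, if_false]
    have hl2 : 0 < lam ^ 2 := by positivity
    set s := Real.sqrt (9 * (lam ^ 2 - 1) ^ 2 + 32 * lam ^ 2) with hs
    have hsnn : 0 ≤ s := Real.sqrt_nonneg _
    have hupper : s ≤ 3 * (lam ^ 2 + 1) := by
      rw [hs, show (3 : ℝ) * (lam ^ 2 + 1) = Real.sqrt ((3 * (lam ^ 2 + 1)) ^ 2) from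
        (Real.sqrt_sq (by positivity)).symm]
      apply Real.sqrt_le_sqrt
      nlinarith
    have hlower : (7 * lam ^ 2 + 9) / 3 ≤ s := by
      rw [hs]
      rw [show (7 * lam ^ 2 + 9) / 3 = Real.sqrt (((7 * lam ^ 2 + 9) / 3) ^ 2) from
        (Real.sqrt_sq (by positivity)).symm]
      apply Real.sqrt_le_sqrt
      nlinarith
    constructor
    · rw [div_le_div_iff₀ (by norm_num) (by positivity)]
      nlinarith [mul_le_mul_of_nonneg_left hlower hM.le]
    · rw [div_le_iff₀ (by positivity)]
      nlinarith [mul_le_mul_of_nonneg_left hupper hM.le]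
end

section
/- For M > 0, the function r(λ) = [3M(λ²-1) + M√(9(λ²-1)² + 32λ²)]/(2λ²) is monotone increasing in λ on (0,∞) and tends to 3M as λ → ∞. -/
/-!
Substituting `u = λ⁻²` gives `2 r(λ) / M = 3 - 3u + √(9u² + 14u + 9)`. Completing the square,
`9u² + 14u + 9 = x² + 32/9` with `x = 3u + 7/3`, so this is `16/3 + (√(x² + 32/9) - x)`, and
`x ↦ √(x² + c) - x` is strictly decreasing for `c > 0`. Since `u` decreases in `λ`, `r` increases,
and as `λ → ∞` we get `u → 0` and `2r/M → 3 + √9 = 6`.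
-/

open Filter Real

lemma strictAnti_sqrt_sq_add_sub {c : ℝ} (hc : 0 < c) :
    StrictAnti fun x : ℝ => √(x ^ 2 + c) - x := by
  intro x y hxy
  show √(y ^ 2 + c) - y < √(x ^ 2 + c) - x
  have hx : x < √(x ^ 2 + c) := lt_sqrt_of_sq_lt (by linarith)
  have hy : y < √(y ^ 2 + c) := lt_sqrt_of_sq_lt (by linarith)
  have hx2 := sq_sqrt (show 0 ≤ x ^ 2 + c by positivity)
  have hy2 := sq_sqrt (show 0 ≤ y ^ 2 + c by positivity)
  have hsum : 0 < √(x ^ 2 + c) + √(y ^ 2 + c) := by positivity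
  -- `(√(y²+c) - √(x²+c)) (√(y²+c) + √(x²+c)) = (y - x)(y + x)` and `y + x < √(y²+c) + √(x²+c)`
  by_contra! h
  nlinarith [mul_nonneg (sub_nonneg.2 h) hsum.le,
    mul_pos (sub_pos.2 hxy) (show 0 < √(x ^ 2 + c) + √(y ^ 2 + c) - x - y by linarith)]

/-- `2 r(λ) / M` as a function of `u = λ⁻²`. -/
noncomputable def scaledRoot (u : ℝ) : ℝ := 3 - 3 * u + √(9 * u ^ 2 + 14 * u + 9)

lemma scaledRoot_eq (u : ℝ) :
    scaledRoot u = 16 / 3 + (√((3 * u + 7 / 3) ^ 2 + 32 / 9) - (3 * u + 7 / 3)) := by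
  rw [scaledRoot, show (3 * u + 7 / 3) ^ 2 + 32 / 9 = 9 * u ^ 2 + 14 * u + 9 by ring]
  ring

lemma strictAnti_scaledRoot : StrictAnti scaledRoot := fun u v huv => by
  have := strictAnti_sqrt_sq_add_sub (c := 32 / 9) (by norm_num)
    (show 3 * u + 7 / 3 < 3 * v + 7 / 3 by linarith)
  simp only [scaledRoot_eq]
  linarith

lemma scaledRoot_zero : scaledRoot 0 = 6 := by
  norm_num [scaledRoot, show (9 : ℝ) = 3 ^ 2 by norm_num]

lemma continuous_scaledRoot : Continuous scaledRoot := by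
  unfold scaledRoot
  fun_prop

lemma root_eq_scaledRoot (M : ℝ) {lam : ℝ} (hlam : 0 < lam) :
    (3 * M * (lam ^ 2 - 1) + M * √(9 * (lam ^ 2 - 1) ^ 2 + 32 * lam ^ 2)) / (2 * lam ^ 2)
      = M / 2 * scaledRoot (lam ^ 2)⁻¹ := by
  have hlam2 : 0 < lam ^ 2 := by positivity
  have hrad : 9 * (lam ^ 2 - 1) ^ 2 + 32 * lam ^ 2
      = (lam ^ 2) ^ 2 * (9 * ((lam ^ 2)⁻¹) ^ 2 + 14 * (lam ^ 2)⁻¹ + 9) := by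
    field_simp
    ring
  rw [hrad, sqrt_mul (sq_nonneg _), sqrt_sq hlam2.le, scaledRoot]
  field_simp

/-- For `M > 0`, the function `r(λ)` is strictly increasing on `(0, ∞)` and tends
to `3M` as `λ → ∞`. -/
theorem root_monotone_and_limit (M : ℝ) (hM : 0 < M) :
    StrictMonoOn (fun lam : ℝ =>
        (3 * M * (lam ^ 2 - 1) +
          M * Real.sqrt (9 * (lam ^ 2 - 1) ^ 2 + 32 * lam ^ 2)) / (2 * lam ^ 2))
      (Set.Ioi 0) ∧
    Tendsto (fun lam : ℝ =>
        (3 * M * (lam ^ 2 - 1) +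
          M * Real.sqrt (9 * (lam ^ 2 - 1) ^ 2 + 32 * lam ^ 2)) / (2 * lam ^ 2))
      atTop (nhds (3 * M)) := by
  constructor
  · intro a ha b hb hab
    simp only [root_eq_scaledRoot M ha, root_eq_scaledRoot M hb]
    have hinv_lt : (b ^ 2)⁻¹ < (a ^ 2)⁻¹ := by gcongr; exacts [pow_pos ha 2, le_of_lt ha]
    exact mul_lt_mul_of_pos_left (strictAnti_scaledRoot hinv_lt) (half_pos hM)
  · have hinv : Tendsto (fun lam : ℝ => (lam ^ 2)⁻¹) atTop (nhds 0) :=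
      tendsto_inv_atTop_zero.comp (tendsto_pow_atTop two_ne_zero)
    have hlim := ((continuous_scaledRoot.tendsto 0).comp hinv).const_mul (M / 2)
    rw [scaledRoot_zero, show M / 2 * 6 = 3 * M by ring] at hlim
    refine hlim.congr' ?_
    filter_upwards [eventually_gt_atTop 0] with lam hlam
    exact (root_eq_scaledRoot M hlam).symm
end

section
/- For M > 0 and λ ≥ 0, the second derivative with respect to r* of Q_λ at its critical point r(λ) (the unique positive root of λ²r² - 3M(λ²-1)r - 8M²) equals -(2/r(λ)⁵)(1 - 2M/r(λ))²·[2λ²r(λ) - 3M(λ²-1)], and this quantity is strictly negative; in particular the critical point is a nondegenerate maximum. -/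
/-! At a critical point `r₀` of `Q_λ` the product rule for `(1 - 2M/r) Q_λ'` loses the term with
`Q_λ'(r₀) = 0`, so the second `r*`-derivative is `(1 - 2M/r₀)² Q_λ''(r₀)`. Moreover
`Q_λ'(r) = -2 P(r) / r⁵` with `P(r) = λ²r² - 3M(λ²-1)r - 8M²`, so at a root of `P` one gets
`Q_λ''(r₀) = -2 P'(r₀) / r₀⁵`. Finally `r₀ P'(r₀) = r₀ P'(r₀) - P(r₀) = λ²r₀² + 8M² > 0`. -/

theorem HasDerivAt.div_of_eq_zero {𝕜 : Type*} [NontriviallyNormedField 𝕜] {p q : 𝕜 → 𝕜}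
    {p' q' x : 𝕜} (hp : HasDerivAt p p' x) (hq : HasDerivAt q q' x) (hpx : p x = 0)
    (hqx : q x ≠ 0) : HasDerivAt (fun y => p y / q y) (p' / q x) x := by
  refine (hp.div hq hqx).congr_deriv ?_
  rw [hpx]
  field_simp
  ring

theorem deriv_mul_deriv_of_deriv_eq_zero {𝕜 : Type*} [NontriviallyNormedField 𝕜]
    {h f : 𝕜 → 𝕜} {x : 𝕜} (hh : DifferentiableAt 𝕜 h x) (hf : DifferentiableAt 𝕜 (deriv f) x)
    (hfx : deriv f x = 0) : deriv (fun y => h y * deriv f y) x = h x * deriv (deriv f) x := by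
  rw [deriv_fun_mul hh hf, hfx, mul_zero, zero_add]

namespace Schwarzschild

variable (M lam : ℝ)

noncomputable def potential (r : ℝ) : ℝ := (1 - 2 * M / r) * (2 * M / r ^ 3 + lam ^ 2 / r ^ 2)

def criticalPoly (r : ℝ) : ℝ := lam ^ 2 * r ^ 2 - 3 * M * (lam ^ 2 - 1) * r - 8 * M ^ 2

variable {M lam}

theorem hasDerivAt_one_sub_div {r : ℝ} (hr : r ≠ 0) :
    HasDerivAt (fun r : ℝ => 1 - 2 * M / r) (2 * M / r ^ 2) r := by
  refine (((hasDerivAt_const r (2 * M)).div (hasDerivAt_id r) hr).const_sub 1).congr_deriv ?_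
  simp only [id_eq]
  field_simp
  ring

theorem hasDerivAt_potential {r : ℝ} (hr : r ≠ 0) :
    HasDerivAt (potential M lam) (-2 * criticalPoly M lam r / r ^ 5) r := by
  have hsum : HasDerivAt (fun r : ℝ => 2 * M / r ^ 3 + lam ^ 2 / r ^ 2)
      (-(6 * M) / r ^ 4 + -(2 * lam ^ 2) / r ^ 3) r := by
    refine (((hasDerivAt_const r (2 * M)).div (hasDerivAt_pow 3 r) (pow_ne_zero 3 hr)).add
      ((hasDerivAt_const r (lam ^ 2)).div (hasDerivAt_pow 2 r) (pow_ne_zero 2 hr))).congr_deriv ?_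
    field_simp
    ring
  refine ((hasDerivAt_one_sub_div hr).mul hsum).congr_deriv ?_
  unfold criticalPoly
  field_simp
  ring

theorem hasDerivAt_criticalPoly (r : ℝ) :
    HasDerivAt (criticalPoly M lam) (2 * lam ^ 2 * r - 3 * M * (lam ^ 2 - 1)) r := by
  refine ((((hasDerivAt_pow 2 r).const_mul (lam ^ 2)).sub
    ((hasDerivAt_id r).const_mul (3 * M * (lam ^ 2 - 1)))).sub_const (8 * M ^ 2)).congr_deriv ?_
  ring

theorem hasDerivAt_deriv_potential {r : ℝ} (hr : r ≠ 0) (hP : criticalPoly M lam r = 0) :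
    HasDerivAt (deriv (potential M lam)) (-2 * (2 * lam ^ 2 * r - 3 * M * (lam ^ 2 - 1)) / r ^ 5)
      r := by
  have hderiv : deriv (potential M lam) =ᶠ[nhds r] fun s => -2 * criticalPoly M lam s / s ^ 5 := by
    filter_upwards [eventually_ne_nhds hr] with s hs
    exact (hasDerivAt_potential hs).deriv
  refine HasDerivAt.congr_of_eventuallyEq ?_ hderiv
  exact ((hasDerivAt_criticalPoly r).const_mul (-2)).div_of_eq_zero (hasDerivAt_pow 5 r)
    (by rw [hP, mul_zero]) (pow_ne_zero 5 hr)

theorem mul_deriv_criticalPoly_pos {r : ℝ} (hM : 0 < M) (hP : criticalPoly M lam r = 0) :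
    0 < r * (2 * lam ^ 2 * r - 3 * M * (lam ^ 2 - 1)) := by
  have hid : r * (2 * lam ^ 2 * r - 3 * M * (lam ^ 2 - 1)) = (lam * r) ^ 2 + 8 * M ^ 2 := by
    unfold criticalPoly at hP
    linear_combination hP
  rw [hid]
  positivity

end Schwarzschild

open Schwarzschild in
theorem second_rstar_derivative_at_critical_point_general
    (M lam : ℝ) (hM : 0 < M) (rl : ℝ)
    (hroot : lam ^ 2 * rl ^ 2 - 3 * M * (lam ^ 2 - 1) * rl - 8 * M ^ 2 = 0)
    (hrl : rl ∈ Set.Icc (8 * M / 3) (3 * M)) :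
    (1 - 2 * M / rl) *
      deriv (fun r : ℝ => (1 - 2 * M / r) *
        deriv (fun s : ℝ => (1 - 2 * M / s) * (2 * M / s ^ 3 + lam ^ 2 / s ^ 2)) r) rl
      = -(2 / rl ^ 5) * (1 - 2 * M / rl) ^ 2 * (2 * lam ^ 2 * rl - 3 * M * (lam ^ 2 - 1)) ∧
    -(2 / rl ^ 5) * (1 - 2 * M / rl) ^ 2 * (2 * lam ^ 2 * rl - 3 * M * (lam ^ 2 - 1)) < 0 := by
  have hP : criticalPoly M lam rl = 0 := hroot
  have hrl_pos : 0 < rl := by linarith [hrl.1]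
  have hfactor : 0 < 1 - 2 * M / rl := by
    rw [sub_pos, div_lt_one hrl_pos]
    linarith [hrl.1]
  have hQ'' := hasDerivAt_deriv_potential hrl_pos.ne' hP
  have hQ' : deriv (potential M lam) rl = 0 := by
    rw [(hasDerivAt_potential hrl_pos.ne').deriv, hP, mul_zero, zero_div]
  have hsecond := deriv_mul_deriv_of_deriv_eq_zero
    (hasDerivAt_one_sub_div (M := M) hrl_pos.ne').differentiableAt hQ''.differentiableAt hQ'
  refine ⟨?_, ?_⟩
  · change (1 - 2 * M / rl) * deriv (fun r => (1 - 2 * M / r) * deriv (potential M lam) r) rl = _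
    rw [hsecond, hQ''.deriv]
    ring
  · have hbracket : 0 < 2 * lam ^ 2 * rl - 3 * M * (lam ^ 2 - 1) :=
      pos_of_mul_pos_right (mul_deriv_criticalPoly_pos hM hP) hrl_pos.le
    have : 0 < 2 / rl ^ 5 * (1 - 2 * M / rl) ^ 2 * (2 * lam ^ 2 * rl - 3 * M * (lam ^ 2 - 1)) := by
      positivity
    linarith

/-- The second `r*`-derivative of `Q_λ` at its critical point `r(λ)` (the unique
positive root of `λ²r² - 3M(λ²-1)r - 8M²`) equals
`-(2/r(λ)⁵)(1-2M/r(λ))²[2λ²r(λ) - 3M(λ²-1)]`, and is strictly negative;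
in particular the critical point is a nondegenerate maximum.
Here `d/dr* = (1 - 2M/r) d/dr`. -/
theorem second_rstar_derivative_at_critical_point
    (M lam : ℝ) (hM : 0 < M) (hlam : 0 ≤ lam) (rl : ℝ)
    (hroot : lam ^ 2 * rl ^ 2 - 3 * M * (lam ^ 2 - 1) * rl - 8 * M ^ 2 = 0)
    (hrl : rl ∈ Set.Icc (8 * M / 3) (3 * M)) :
    (1 - 2 * M / rl) *
      deriv (fun r : ℝ => (1 - 2 * M / r) *
        deriv (fun s : ℝ => (1 - 2 * M / s) * (2 * M / s ^ 3 + lam ^ 2 / s ^ 2)) r) rl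
      = -(2 / rl ^ 5) * (1 - 2 * M / rl) ^ 2 * (2 * lam ^ 2 * rl - 3 * M * (lam ^ 2 - 1)) ∧
    -(2 / rl ^ 5) * (1 - 2 * M / rl) ^ 2 * (2 * lam ^ 2 * rl - 3 * M * (lam ^ 2 - 1)) < 0 :=
  second_rstar_derivative_at_critical_point_general M lam hM rl hroot hrl
end

section
/- There exists a constant c > 0 (independent of λ) such that for all M > 0 and λ ≥ 0, the second r*-derivative of Q_λ at its critical point r(λ) satisfies |Q_λ''(r(λ))| ≥ c(1 + λ²)/M⁴, i.e., the nondegeneracy is uniform and of order λ² as λ → ∞ after scaling by M. -/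
/-!
Differentiating `Q_λ = (1 - 2M/r)(2M/r³ + λ²/r²)` gives `dQ_λ/dr = -2 P(r)/r⁵` with
`P(r) = λ²r² - 3M(λ² - 1)r - 8M²`, so `Q_λ'(r) = -2(r - 2M) P(r)/r⁶` and, at a root `r₀` of `P`,
`Q_λ''(r₀) = -2(r₀ - 2M)² P'(r₀)/r₀⁷`. On `[8M/3, 3M]` we have `(r₀ - 2M)² ≥ (2M/3)²`,
`r₀⁷ ≤ (3M)⁷` and `P'(r₀) = 2λ²r₀ - 3M(λ² - 1) ≥ M(1 + λ²)`, whence `|Q_λ''(r₀)| ≥ 8(1 + λ²)/(3⁹ M⁴)`.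
-/

theorem HasDerivAt.mul_of_eq_zero {f p : ℝ → ℝ} {p' x : ℝ} (hf : DifferentiableAt ℝ f x)
    (hp : HasDerivAt p p' x) (hpx : p x = 0) : HasDerivAt (fun y => f y * p y) (f x * p') x :=
  (hf.hasDerivAt.mul hp).congr_deriv (by simp [hpx])

def critPoly (M lam r : ℝ) : ℝ := lam ^ 2 * r ^ 2 - 3 * M * (lam ^ 2 - 1) * r - 8 * M ^ 2

theorem hasDerivAt_critPoly (M lam r : ℝ) :
    HasDerivAt (critPoly M lam) (2 * lam ^ 2 * r - 3 * M * (lam ^ 2 - 1)) r := by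
  have h := (((hasDerivAt_pow 2 r).const_mul (lam ^ 2)).sub
    ((hasDerivAt_id r).const_mul (3 * M * (lam ^ 2 - 1)))).sub_const (8 * M ^ 2)
  exact h.congr_deriv (by push_cast; ring)

theorem hasDerivAt_potential (M lam : ℝ) {s : ℝ} (hs : s ≠ 0) :
    HasDerivAt (fun s : ℝ => (1 - 2 * M / s) * (2 * M / s ^ 3 + lam ^ 2 / s ^ 2))
      (-2 * critPoly M lam s / s ^ 5) s := by
  have hf := ((hasDerivAt_const s (2 * M)).fun_div (hasDerivAt_id' s) hs).const_sub 1
  have hV :=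
    ((hasDerivAt_const s (2 * M)).fun_div (hasDerivAt_pow 3 s) (pow_ne_zero 3 hs)).fun_add
      ((hasDerivAt_const s (lam ^ 2)).fun_div (hasDerivAt_pow 2 s) (pow_ne_zero 2 hs))
  refine (hf.fun_mul hV).congr_deriv ?_
  simp only [critPoly]
  field_simp
  ring

theorem tortoise_deriv_potential_eq (M lam : ℝ) {r : ℝ} (hr : r ≠ 0) :
    (1 - 2 * M / r) *
        deriv (fun s : ℝ => (1 - 2 * M / s) * (2 * M / s ^ 3 + lam ^ 2 / s ^ 2)) r =
      (-2 * (r - 2 * M) / r ^ 6) * critPoly M lam r := by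
  rw [(hasDerivAt_potential M lam hr).deriv]
  field_simp

theorem second_tortoise_deriv_potential_of_critPoly_eq_zero (M lam : ℝ) {r₀ : ℝ}
    (hr₀ : r₀ ≠ 0) (hcrit : critPoly M lam r₀ = 0) :
    (1 - 2 * M / r₀) *
        deriv (fun r : ℝ => (1 - 2 * M / r) *
          deriv (fun s : ℝ => (1 - 2 * M / s) * (2 * M / s ^ 3 + lam ^ 2 / s ^ 2)) r) r₀ =
      -(2 * (r₀ - 2 * M) ^ 2 * (2 * lam ^ 2 * r₀ - 3 * M * (lam ^ 2 - 1)) / r₀ ^ 7) := by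
  have hloc : (fun r : ℝ => (1 - 2 * M / r) *
        deriv (fun s : ℝ => (1 - 2 * M / s) * (2 * M / s ^ 3 + lam ^ 2 / s ^ 2)) r)
      =ᶠ[nhds r₀] fun r => (-2 * (r - 2 * M) / r ^ 6) * critPoly M lam r := by
    filter_upwards [eventually_ne_nhds hr₀] with r hr
    exact tortoise_deriv_potential_eq M lam hr
  have hdiff : DifferentiableAt ℝ (fun r : ℝ => -2 * (r - 2 * M) / r ^ 6) r₀ := by
    fun_prop (disch := exact pow_ne_zero 6 hr₀)
  rw [hloc.deriv_eq, ((hasDerivAt_critPoly M lam r₀).mul_of_eq_zero hdiff hcrit).deriv]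
  field_simp

theorem one_add_sq_mul_le_deriv_critPoly {M lam r : ℝ} (hM : 0 < M) (hr : 8 * M / 3 ≤ r) :
    M * (1 + lam ^ 2) ≤ 2 * lam ^ 2 * r - 3 * M * (lam ^ 2 - 1) := by
  nlinarith [mul_le_mul_of_nonneg_left hr (sq_nonneg lam), mul_nonneg hM.le (sq_nonneg lam)]

theorem const_mul_div_pow_four_le_of_mem_Icc {M K r : ℝ} (hM : 0 < M) (hK : 0 ≤ K)
    (hr : r ∈ Set.Icc (8 * M / 3) (3 * M)) :
    8 / 19683 * K / M ^ 4 ≤ 2 * (r - 2 * M) ^ 2 * (M * K) / r ^ 7 := by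
  obtain ⟨hlo, hhi⟩ := hr
  have hr₀ : 0 < r := by linarith
  have h7 : r ^ 7 ≤ (3 * M) ^ 7 := pow_le_pow_left₀ hr₀.le hhi 7
  have hsq : (2 * M / 3) ^ 2 ≤ (r - 2 * M) ^ 2 := pow_le_pow_left₀ (by linarith) (by linarith) 2
  rw [div_le_div_iff₀ (by positivity) (by positivity)]
  calc 8 / 19683 * K * r ^ 7 ≤ 8 / 19683 * K * (3 * M) ^ 7 := by gcongr
    _ = 2 * (2 * M / 3) ^ 2 * (M * K) * M ^ 4 := by ring
    _ ≤ 2 * (r - 2 * M) ^ 2 * (M * K) * M ^ 4 := by gcongr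

/-- Uniform nondegeneracy of the critical point: there is a constant `c > 0`,
independent of `λ`, such that the second `r*`-derivative of `Q_λ` at its unique
positive critical point `r(λ) ∈ [8M/3, 3M]` satisfies `|Q_λ''(r(λ))| ≥ c(1+λ²)/M⁴`. -/
theorem uniform_nondegeneracy :
    ∃ c : ℝ, 0 < c ∧ ∀ M lam rl : ℝ, 0 < M → 0 ≤ lam →
      lam ^ 2 * rl ^ 2 - 3 * M * (lam ^ 2 - 1) * rl - 8 * M ^ 2 = 0 →
      rl ∈ Set.Icc (8 * M / 3) (3 * M) →
      c * (1 + lam ^ 2) / M ^ 4 ≤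
        |(1 - 2 * M / rl) *
          deriv (fun r : ℝ => (1 - 2 * M / r) *
            deriv (fun s : ℝ => (1 - 2 * M / s) * (2 * M / s ^ 3 + lam ^ 2 / s ^ 2)) r) rl| := by
  refine ⟨8 / 19683, by norm_num, fun M lam rl hM _ hcrit hrl => ?_⟩
  have hrl₀ : 0 < rl := by linarith [hrl.1]
  have hP' := one_add_sq_mul_le_deriv_critPoly (lam := lam) hM hrl.1
  have hP'_nonneg : 0 ≤ 2 * lam ^ 2 * rl - 3 * M * (lam ^ 2 - 1) :=
    (by positivity : (0 : ℝ) ≤ M * (1 + lam ^ 2)).trans hP'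
  rw [second_tortoise_deriv_potential_of_critPoly_eq_zero M lam hrl₀.ne' hcrit, abs_neg,
    abs_of_nonneg (div_nonneg (mul_nonneg (by positivity) hP'_nonneg) (by positivity))]
  calc 8 / 19683 * (1 + lam ^ 2) / M ^ 4
      ≤ 2 * (rl - 2 * M) ^ 2 * (M * (1 + lam ^ 2)) / rl ^ 7 :=
        const_mul_div_pow_four_le_of_mem_Icc hM (by positivity) hrl
    _ ≤ _ := by gcongr
end

section
/- For every compactly supported smooth function ψ: ℝ → ℝ and every x₀ > 0, one has ∫_{-x₀}^{x₀} (1+|x|)^{-2} ψ(x)² dx ≲ ψ(0)² + ∫_{-x₀}^{x₀} ψ'(x)² dx, with an absolute implicit constant. -/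
/-!
On `[0, a]`, integrating the derivative of `-ψ² / (1 + x)` gives
`∫ ψ² / (1 + x)² = ψ(0)² - ψ(a)² / (1 + a) + ∫ 2 ψ ψ' / (1 + x)`, and AM-GM absorbs half of the
left-hand side into the last integral, leaving `2 ψ(0)² + 4 ∫ ψ'²`. Reflecting `x ↦ -x` handles
`[-a, 0]`.
-/

open MeasureTheory Set

lemma integral_Icc_neg_self_eq {f : ℝ → ℝ} {a : ℝ} (ha : 0 ≤ a)
    (hf : IntervalIntegrable f volume (-a) a) :
    ∫ x in Icc (-a) a, f x = (∫ x in 0..a, f x) + ∫ x in 0..a, f (-x) := by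
  have hneg : IntervalIntegrable f volume (-a) 0 :=
    hf.mono_set (uIcc_subset_uIcc_left (by simp [uIcc_of_le, ha]))
  have hpos : IntervalIntegrable f volume 0 a :=
    hf.mono_set (uIcc_subset_uIcc_right (by simp [uIcc_of_le, ha]))
  rw [integral_Icc_eq_integral_Ioc, ← intervalIntegral.integral_of_le (by linarith),
    ← intervalIntegral.integral_add_adjacent_intervals hneg hpos,
    intervalIntegral.integral_comp_neg, neg_zero, add_comm]

lemma two_mul_mul_div_le (u v t : ℝ) : 2 * u * v / t ≤ 2⁻¹ * ((t ^ 2)⁻¹ * u ^ 2) + 2 * v ^ 2 := by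
  have key : (t ^ 2)⁻¹ * u ^ 2 = (u / t) ^ 2 := by rw [div_pow, inv_mul_eq_div]
  rw [key, mul_div_right_comm, mul_div_assoc]
  nlinarith [sq_nonneg (u / t - 2 * v)]

lemma hasDerivAt_neg_sq_div_one_add {ψ : ℝ → ℝ} {ψ' x : ℝ} (hψ : HasDerivAt ψ ψ' x)
    (hx : 1 + x ≠ 0) :
    HasDerivAt (fun y => -(ψ y ^ 2 / (1 + y)))
      (((1 + x) ^ 2)⁻¹ * ψ x ^ 2 - 2 * ψ x * ψ' / (1 + x)) x := by
  refine ((hψ.fun_pow 2).fun_div ((hasDerivAt_id' x).const_add 1) hx).fun_neg.congr_deriv ?_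
  field_simp
  ring

lemma integral_inv_one_add_sq_mul_sq_le {ψ : ℝ → ℝ} (hψ : ContDiff ℝ 1 ψ) {a : ℝ} (ha : 0 ≤ a) :
    ∫ x in 0..a, ((1 + x) ^ 2)⁻¹ * ψ x ^ 2 ≤ 2 * ψ 0 ^ 2 + 4 * ∫ x in 0..a, deriv ψ x ^ 2 := by
  have hψc : Continuous ψ := hψ.continuous
  have hψ'c : Continuous (deriv ψ) := hψ.continuous_deriv le_rfl
  have hpos : ∀ x ∈ uIcc 0 a, 0 < 1 + x := fun x hx => by
    rw [uIcc_of_le ha] at hx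
    linarith [hx.1]
  have hW : IntervalIntegrable (fun x => ((1 + x) ^ 2)⁻¹ * ψ x ^ 2) volume 0 a :=
    ContinuousOn.intervalIntegrable <| by
      refine ContinuousOn.mul (ContinuousOn.inv₀ (by fun_prop) fun x hx => ?_) (by fun_prop)
      exact (pow_pos (hpos x hx) 2).ne'
  have hM : IntervalIntegrable (fun x => 2 * ψ x * deriv ψ x / (1 + x)) volume 0 a :=
    ContinuousOn.intervalIntegrable <|
      ContinuousOn.div (by fun_prop) (by fun_prop) fun x hx => (hpos x hx).ne'
  have hD : IntervalIntegrable (fun x => deriv ψ x ^ 2) volume 0 a :=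
    (hψ'c.pow 2).intervalIntegrable _ _
  set W := ∫ x in 0..a, ((1 + x) ^ 2)⁻¹ * ψ x ^ 2
  set M := ∫ x in 0..a, 2 * ψ x * deriv ψ x / (1 + x)
  set D := ∫ x in 0..a, deriv ψ x ^ 2
  have hibp : W - M = ψ 0 ^ 2 - ψ a ^ 2 / (1 + a) := by
    rw [← intervalIntegral.integral_sub hW hM]
    convert intervalIntegral.integral_eq_sub_of_hasDerivAt
      (f := fun x => -(ψ x ^ 2 / (1 + x))) (fun x hx => ?_) (hW.sub hM) using 1
    · simp only [add_zero, div_one]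
      ring
    · exact hasDerivAt_neg_sq_div_one_add (hψ.differentiable one_ne_zero x).hasDerivAt
        (hpos x hx).ne'
  have hamgm : M ≤ 2⁻¹ * W + 2 * D := by
    have := intervalIntegral.integral_mono_on ha hM ((hW.const_mul 2⁻¹).add (hD.const_mul 2))
      fun x _ => two_mul_mul_div_le (ψ x) (deriv ψ x) (1 + x)
    rwa [intervalIntegral.integral_add (hW.const_mul _) (hD.const_mul _),
      intervalIntegral.integral_const_mul, intervalIntegral.integral_const_mul] at this
  have hbdry : 0 ≤ ψ a ^ 2 / (1 + a) := div_nonneg (sq_nonneg _) (by linarith)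
  linarith

lemma integral_inv_one_add_abs_sq_mul_sq_le {ψ : ℝ → ℝ} (hψ : ContDiff ℝ 1 ψ) {a : ℝ}
    (ha : 0 ≤ a) :
    ∫ x in 0..a, ((1 + |x|) ^ 2)⁻¹ * ψ x ^ 2 ≤ 2 * ψ 0 ^ 2 + 4 * ∫ x in 0..a, deriv ψ x ^ 2 := by
  rw [intervalIntegral.integral_congr fun x hx => by
    rw [abs_of_nonneg (uIcc_of_le ha ▸ hx).1]]
  exact integral_inv_one_add_sq_mul_sq_le hψ ha

/-- Poincaré-type estimate: for compactly supported `C¹` functions `ψ` and `x₀ > 0`,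
`∫_{-x₀}^{x₀} (1+|x|)⁻² ψ² dx ≲ ψ(0)² + ∫_{-x₀}^{x₀} (ψ')² dx` with an absolute constant. -/
theorem poincare_weighted :
    ∃ C : ℝ, 0 < C ∧ ∀ ψ : ℝ → ℝ, ContDiff ℝ 1 ψ → HasCompactSupport ψ →
      ∀ x₀ : ℝ, 0 < x₀ →
      (∫ x in Set.Icc (-x₀) x₀, ((1 + |x|) ^ 2)⁻¹ * ψ x ^ 2) ≤
        C * (ψ 0 ^ 2 + ∫ x in Set.Icc (-x₀) x₀, (deriv ψ x) ^ 2) := by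
  refine ⟨4, four_pos, fun ψ hψ _ x₀ hx₀ => ?_⟩
  have hright := integral_inv_one_add_abs_sq_mul_sq_le hψ hx₀.le
  have hleft := integral_inv_one_add_abs_sq_mul_sq_le (ψ := fun x => ψ (-x))
    (hψ.comp contDiff_neg) hx₀.le
  simp only [deriv_comp_neg, neg_sq, neg_zero] at hleft
  have hWc : Continuous fun x => ((1 + |x|) ^ 2)⁻¹ * ψ x ^ 2 := by
    have := hψ.continuous
    fun_prop (disch := exact fun x => by positivity)
  have hDc : Continuous fun x => deriv ψ x ^ 2 := (hψ.continuous_deriv le_rfl).pow 2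
  rw [integral_Icc_neg_self_eq hx₀.le (hWc.intervalIntegrable _ _),
    integral_Icc_neg_self_eq hx₀.le (hDc.intervalIntegrable _ _)]
  simp only [abs_neg]
  linarith
end

section
/- For every smooth compactly supported function ψ: ℝ → ℝ and every ε ∈ (0,1] and k > 1, one has ψ(0)² ≲ ∫_ℝ (1+ε|x|)^{-k} ψ'(x)² dx + ∫_ℝ x² χ(x) ψ(x)² dx, where χ is a fixed smooth bump function equal to 1 on [-1,1] and supported in [-2,2], with implicit constant independent of ε and ψ. -/
open MeasureTheory

/-- For `ψ ∈ C_c^∞(ℝ)`, `ε ∈ (0,1]` and fixed `k > 1`,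
`ψ(0)² ≲ ∫ (1+ε|x|)^{-k} (ψ')² dx + ∫ x² χ(x) ψ² dx`, where `χ` is a fixed smooth
bump equal to `1` on `[-1,1]` and supported in `[-2,2]`; the constant is
independent of `ε` and `ψ`. -/
theorem pointwise_at_origin_bound (k : ℝ) (hk : 1 < k)
    (χ : ℝ → ℝ) (hχ : ContDiff ℝ (⊤ : ℕ∞) χ) (hχ01 : ∀ x, χ x ∈ Set.Icc (0:ℝ) 1)
    (hχ1 : ∀ x ∈ Set.Icc (-1:ℝ) 1, χ x = 1)
    (hχsupp : Function.support χ ⊆ Set.Icc (-2:ℝ) 2) :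
    ∃ C : ℝ, 0 < C ∧ ∀ ε : ℝ, 0 < ε → ε ≤ 1 →
      ∀ ψ : ℝ → ℝ, ContDiff ℝ (⊤ : ℕ∞) ψ → HasCompactSupport ψ →
      ψ 0 ^ 2 ≤ C * ((∫ x, (1 + ε * |x|) ^ (-k) * (deriv ψ x) ^ 2) +
        ∫ x, x ^ 2 * χ x * ψ x ^ 2) := by
  have h3k : (1:ℝ) ≤ (3:ℝ) ^ k := Real.one_le_rpow (by norm_num) (by linarith)
  have h3kpos : (0:ℝ) < (3:ℝ) ^ k := lt_of_lt_of_le one_pos h3k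
  refine ⟨16 * 3 ^ k, by positivity, ?_⟩
  intro ε hε hε1 ψ hψ hψc
  set g := deriv ψ with hg
  have hgc : Continuous g := hψ.continuous_deriv (by simp)
  have hψcont : Continuous ψ := hψ.continuous
  have hgcs : HasCompactSupport g := hψc.deriv
  have hχc : Continuous χ := hχ.continuous
  have hwpos : ∀ x : ℝ, (0:ℝ) < 1 + ε * |x| := fun x => by positivity
  have hw : Continuous (fun x : ℝ => (1 + ε * |x|) ^ (-k)) := by
    apply Continuous.rpow_const (by continuity)
    intro x; left; exact (hwpos x).ne'
  -- integrability of the two global integrands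
  have hg2cs : HasCompactSupport (fun x => g x ^ 2) :=
    hgcs.comp_left (g := fun t : ℝ => t ^ 2) (by simp)
  have hψ2cs : HasCompactSupport (fun x => ψ x ^ 2) :=
    hψc.comp_left (g := fun t : ℝ => t ^ 2) (by simp)
  have hI1int : Integrable (fun x => (1 + ε * |x|) ^ (-k) * g x ^ 2) :=
    (hw.mul (hgc.pow 2)).integrable_of_hasCompactSupport hg2cs.mul_left
  have hI2int : Integrable (fun x => x ^ 2 * χ x * ψ x ^ 2) :=
    (((continuous_id.pow 2).mul hχc).mul (hψcont.pow 2)).integrable_of_hasCompactSupport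
      hψ2cs.mul_left
  -- nonnegativity of the two global integrands
  have hI1nn : ∀ x : ℝ, 0 ≤ (1 + ε * |x|) ^ (-k) * g x ^ 2 := fun x => by positivity
  have hI2nn : ∀ x : ℝ, 0 ≤ x ^ 2 * χ x * ψ x ^ 2 := fun x =>
    mul_nonneg (mul_nonneg (sq_nonneg x) (hχ01 x).1) (sq_nonneg _)
  set I1 := ∫ x, (1 + ε * |x|) ^ (-k) * g x ^ 2 with hI1
  set I2 := ∫ x, x ^ 2 * χ x * ψ x ^ 2 with hI2
  -- Step B : ∫_{[0,1]} g² ≤ 3^k * I1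
  have hgInt : IntegrableOn (fun x => g x ^ 2) (Set.Icc (0:ℝ) 1) :=
    (hgc.pow 2).integrableOn_Icc
  have hStepB : ∫ x in Set.Icc (0:ℝ) 1, g x ^ 2 ≤ 3 ^ k * I1 := by
    have h1 : ∫ x in Set.Icc (0:ℝ) 1, g x ^ 2
        ≤ ∫ x in Set.Icc (0:ℝ) 1, 3 ^ k * ((1 + ε * |x|) ^ (-k) * g x ^ 2) := by
      apply setIntegral_mono_on hgInt
        ((hI1int.const_mul _).integrableOn) measurableSet_Icc
      intro x hx
      have hb : 1 + ε * |x| ≤ 3 := by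
        have hxabs : |x| ≤ 1 := by rw [abs_le]; exact ⟨by linarith [hx.1], hx.2⟩
        nlinarith [abs_nonneg x]
      have hwk : (3:ℝ) ^ (-k) ≤ (1 + ε * |x|) ^ (-k) :=
        Real.rpow_le_rpow_of_nonpos (hwpos x) hb (by linarith)
      have h3 : (3:ℝ) ^ (-k) = ((3:ℝ) ^ k)⁻¹ := by
        rw [Real.rpow_neg (by norm_num)]
      calc g x ^ 2 = 3 ^ k * (((3:ℝ) ^ k)⁻¹ * g x ^ 2) := by field_simp
        _ ≤ 3 ^ k * ((1 + ε * |x|) ^ (-k) * g x ^ 2) := by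
            apply mul_le_mul_of_nonneg_left _ h3kpos.le
            apply mul_le_mul_of_nonneg_right _ (sq_nonneg _)
            rw [← h3]; exact hwk
    have h2 : ∫ x in Set.Icc (0:ℝ) 1, 3 ^ k * ((1 + ε * |x|) ^ (-k) * g x ^ 2)
        ≤ 3 ^ k * I1 := by
      rw [integral_const_mul _ _]
      exact mul_le_mul_of_nonneg_left
        (setIntegral_le_integral hI1int (Filter.Eventually.of_forall hI1nn)) h3kpos.le
    linarith
  -- Step C : ∫_{[1/2,1]} ψ² ≤ 4 * I2
  have hψInt : IntegrableOn (fun x => ψ x ^ 2) (Set.Icc (1/2:ℝ) 1) :=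
    (hψcont.pow 2).integrableOn_Icc
  have hStepC : ∫ x in Set.Icc (1/2:ℝ) 1, ψ x ^ 2 ≤ 4 * I2 := by
    have h1 : ∫ x in Set.Icc (1/2:ℝ) 1, ψ x ^ 2
        ≤ ∫ x in Set.Icc (1/2:ℝ) 1, 4 * (x ^ 2 * χ x * ψ x ^ 2) := by
      apply setIntegral_mono_on hψInt
        ((hI2int.const_mul _).integrableOn) measurableSet_Icc
      intro x hx
      have hχx : χ x = 1 := hχ1 x ⟨by linarith [hx.1], hx.2⟩
      have hx2 : (1:ℝ) ≤ 4 * x ^ 2 := by nlinarith [hx.1]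
      rw [hχx]
      nlinarith [sq_nonneg (ψ x)]
    have h2 : ∫ x in Set.Icc (1/2:ℝ) 1, 4 * (x ^ 2 * χ x * ψ x ^ 2) ≤ 4 * I2 := by
      rw [integral_const_mul _ _]
      have := setIntegral_le_integral hI2int (Filter.Eventually.of_forall hI2nn)
        (s := Set.Icc (1/2:ℝ) 1)
      linarith
    linarith
  -- Cauchy–Schwarz on [0,1] : A² ≤ ∫_{[0,1]} g²  where A = ∫_{[0,1]} |g|
  set A := ∫ x in Set.Icc (0:ℝ) 1, |g x| with hA
  have hgabsInt : IntegrableOn (fun x => |g x|) (Set.Icc (0:ℝ) 1) :=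
    hgc.abs.integrableOn_Icc
  have hvol : (volume (Set.Icc (0:ℝ) 1)).toReal = 1 := by
    rw [Real.volume_Icc]; norm_num
  have hCS : A ^ 2 ≤ ∫ x in Set.Icc (0:ℝ) 1, g x ^ 2 := by
    have hnn : (0:ℝ) ≤ ∫ x in Set.Icc (0:ℝ) 1, (|g x| - A) ^ 2 :=
      integral_nonneg fun x => sq_nonneg _
    have hexp : ∫ x in Set.Icc (0:ℝ) 1, (|g x| - A) ^ 2
        = (∫ x in Set.Icc (0:ℝ) 1, g x ^ 2) - 2 * A * A + A ^ 2 := by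
      have e1 : ∀ x : ℝ, (|g x| - A) ^ 2 = g x ^ 2 - 2 * A * |g x| + A ^ 2 := by
        intro x; rw [sub_sq, sq_abs]; ring
      simp only [e1]
      have haux : IntegrableOn (fun x => g x ^ 2 - 2 * A * |g x|) (Set.Icc (0:ℝ) 1) :=
        hgInt.sub (hgabsInt.const_mul (2 * A))
      rw [integral_add haux (integrableOn_const (hs := measure_Icc_lt_top.ne)),
        integral_sub hgInt (hgabsInt.const_mul (2 * A)), integral_const_mul _ _,
        setIntegral_const, measureReal_def, hvol, smul_eq_mul, one_mul]
    nlinarith [hnn, hexp]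
  -- FTC pointwise bound for x ∈ [1/2, 1]
  have hPt : ∀ x ∈ Set.Icc (1/2:ℝ) 1,
      ψ 0 ^ 2 ≤ 2 * ψ x ^ 2 + 2 * ∫ t in Set.Icc (0:ℝ) 1, g t ^ 2 := by
    intro x hx
    have hx0 : (0:ℝ) ≤ x := by linarith [hx.1]
    have hFTC : ∫ t in (0:ℝ)..x, g t = ψ x - ψ 0 :=
      intervalIntegral.integral_deriv_eq_sub
        (fun t _ => (hψ.differentiable (by simp)).differentiableAt)
        (hgc.intervalIntegrable 0 x)
    set J := ∫ t in (0:ℝ)..x, g t with hJ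
    have hJA : |J| ≤ A := by
      calc |J| ≤ ∫ t in (0:ℝ)..x, |g t| :=
            intervalIntegral.abs_integral_le_integral_abs hx0
        _ = ∫ t in Set.Ioc (0:ℝ) x, |g t| := by
            rw [intervalIntegral.integral_of_le hx0]
        _ ≤ A := by
            apply setIntegral_mono_set hgabsInt
              (Filter.Eventually.of_forall fun t => abs_nonneg _)
            apply Filter.Eventually.of_forall
            intro t ht
            exact ⟨le_of_lt ht.1, le_trans ht.2 hx.2⟩
    have hJ2 : J ^ 2 ≤ A ^ 2 := by
      rw [← sq_abs J]
      have hA0 : 0 ≤ A := le_trans (abs_nonneg J) hJA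
      nlinarith [abs_nonneg J]
    have hψ0 : ψ 0 = ψ x - J := by rw [hFTC]; ring
    have h1 : ψ 0 ^ 2 ≤ 2 * ψ x ^ 2 + 2 * J ^ 2 := by
      rw [hψ0]; nlinarith [sq_nonneg (ψ x + J)]
    linarith [hCS.trans_eq rfl, hJ2]
  -- Average over [1/2, 1]
  have hvol2 : (volume (Set.Icc (1/2:ℝ) 1)).toReal = 1/2 := by
    rw [Real.volume_Icc]; norm_num
  have hAvg : ψ 0 ^ 2 * (1/2)
      ≤ 2 * (∫ x in Set.Icc (1/2:ℝ) 1, ψ x ^ 2)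
        + (∫ t in Set.Icc (0:ℝ) 1, g t ^ 2) := by
    have h1 : ∫ _x in Set.Icc (1/2:ℝ) 1, ψ 0 ^ 2
        ≤ ∫ x in Set.Icc (1/2:ℝ) 1,
            (2 * ψ x ^ 2 + 2 * ∫ t in Set.Icc (0:ℝ) 1, g t ^ 2) := by
      apply setIntegral_mono_on (integrableOn_const (hs := measure_Icc_lt_top.ne))
        ((hψInt.const_mul 2).add (integrableOn_const (hs := measure_Icc_lt_top.ne))) measurableSet_Icc hPt
    rw [setIntegral_const, measureReal_def, hvol2, smul_eq_mul, mul_comm] at h1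
    rw [integral_add (hψInt.const_mul 2) (integrableOn_const (hs := measure_Icc_lt_top.ne)),
      integral_const_mul _ _, setIntegral_const, measureReal_def, hvol2, smul_eq_mul] at h1
    rw [mul_comm] at h1; linarith
  -- conclusion
  have hI1g : ∫ t in Set.Icc (0:ℝ) 1, g t ^ 2 ≤ 3 ^ k * I1 := hStepB
  have hI1nn' : 0 ≤ I1 := integral_nonneg hI1nn
  have hI2nn' : 0 ≤ I2 := integral_nonneg hI2nn
  nlinarith [hAvg, hStepC, hI1g, h3k, hI1nn', hI2nn']
end

section
/- For every smooth compactly supported function ψ: ℝ → ℝ, one has ‖χ̃^{1/2}ψ‖_{L²}² ≲ ‖|x| χ^{1/2} ψ‖_{L²} · ‖χ^{1/2} ψ'‖_{L²} + ‖|x| χ̃^{1/2} ψ‖_{L²}², where χ is a smooth cutoff equal to 1 on [-1,1] and supported in [-2,2], and χ̃ is a cutoff with |x χ'(x)| ≲ x² χ̃(x). -/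
open MeasureTheory

/-- `‖χ̃^{1/2}ψ‖_{L²}² ≲ ‖|x|χ^{1/2}ψ‖_{L²}·‖χ^{1/2}ψ'‖_{L²} + ‖|x|χ̃^{1/2}ψ‖_{L²}²`
for smooth compactly supported `ψ`, where `χ` is a smooth cutoff equal to `1` on
`[-1,1]`, supported in `[-2,2]`, and `χ̃` dominates `|x χ'(x)| ≤ C x² χ̃(x)`. -/
theorem cutoff_L2_bound
    (χ χt : ℝ → ℝ) (hχ : ContDiff ℝ (⊤ : ℕ∞) χ) (hχt : ContDiff ℝ (⊤ : ℕ∞) χt)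
    (hχ01 : ∀ x, χ x ∈ Set.Icc (0:ℝ) 1) (hχt01 : ∀ x, χt x ∈ Set.Icc (0:ℝ) 1)
    (hχ1 : ∀ x ∈ Set.Icc (-1:ℝ) 1, χ x = 1)
    (hχsupp : Function.support χ ⊆ Set.Icc (-2:ℝ) 2)
    (Cb : ℝ) (hCb : ∀ x, |x * deriv χ x| ≤ Cb * x ^ 2 * χt x) :
    ∃ C' : ℝ, 0 < C' ∧ ∀ ψ : ℝ → ℝ, ContDiff ℝ (⊤ : ℕ∞) ψ → HasCompactSupport ψ →
      (∫ x, χt x * ψ x ^ 2) ≤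
        C' * (Real.sqrt (∫ x, x ^ 2 * χ x * ψ x ^ 2) *
                Real.sqrt (∫ x, χ x * (deriv ψ x) ^ 2) +
              ∫ x, x ^ 2 * χt x * ψ x ^ 2) := by
  refine ⟨|Cb| + 3, by positivity, ?_⟩
  intro ψ hψ hψc
  have hχc : Continuous χ := hχ.continuous
  have hχtc : Continuous χt := hχt.continuous
  have hχ'c : Continuous (deriv χ) := hχ.continuous_deriv (by simp)
  have hψcont : Continuous ψ := hψ.continuous
  have hψ'c : Continuous (deriv ψ) := hψ.continuous_deriv (by simp)
  have hψ'cs : HasCompactSupport (deriv ψ) := hψc.deriv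
  -- compact support helpers
  have hCS : ∀ f : ℝ → ℝ, (∀ x, ψ x = 0 → f x = 0) → HasCompactSupport f := by
    intro f hf
    refine hψc.mono fun x hx => ?_
    simp only [Function.mem_support] at hx ⊢
    exact fun h0 => hx (hf x h0)
  have hCS' : ∀ f : ℝ → ℝ, (∀ x, deriv ψ x = 0 → f x = 0) → HasCompactSupport f := by
    intro f hf
    refine hψ'cs.mono fun x hx => ?_
    simp only [Function.mem_support] at hx ⊢
    exact fun h0 => hx (hf x h0)
  have hInt : ∀ f : ℝ → ℝ, Continuous f → (∀ x, ψ x = 0 → f x = 0) → Integrable f :=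
    fun f hc hs => hc.integrable_of_hasCompactSupport (hCS f hs)
  have habsint : ∀ f : ℝ → ℝ, |∫ x, f x| ≤ ∫ x, |f x| := fun f => by
    simpa [Real.norm_eq_abs] using norm_integral_le_integral_norm (μ := volume) f
  have hψd : Differentiable ℝ ψ := hψ.differentiable (by simp)
  have hχd : Differentiable ℝ χ := hχ.differentiable (by simp)
  set A := ∫ x, x ^ 2 * χ x * ψ x ^ 2 with hA
  set B := ∫ x, χ x * (deriv ψ x) ^ 2 with hB
  set D := ∫ x, x ^ 2 * χt x * ψ x ^ 2 with hD
  have hDnn : 0 ≤ D := integral_nonneg fun x => by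
    have := (hχt01 x).1; positivity
  -- integrability of the pieces
  have int1 : Integrable (fun x => χ x * ψ x ^ 2) :=
    hInt _ (hχc.mul (hψcont.pow 2)) (fun x h => by simp [h])
  have int2 : Integrable (fun x => x * deriv χ x * ψ x ^ 2) :=
    hInt _ ((continuous_id.mul hχ'c).mul (hψcont.pow 2)) (fun x h => by simp [h])
  have int3 : Integrable (fun x => x * χ x * (2 * ψ x * deriv ψ x)) :=
    hInt _ ((continuous_id.mul hχc).mul ((continuous_const.mul hψcont).mul hψ'c))
      (fun x h => by simp [h])
  have intD : Integrable (fun x => x ^ 2 * χt x * ψ x ^ 2) :=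
    hInt _ (((continuous_pow 2).mul hχtc).mul (hψcont.pow 2)) (fun x h => by simp [h])
  have intT : Integrable (fun x => χt x * ψ x ^ 2) :=
    hInt _ (hχtc.mul (hψcont.pow 2)) (fun x h => by simp [h])
  have int12 : Integrable (fun x => χ x * ψ x ^ 2 + x * deriv χ x * ψ x ^ 2) := int1.add int2
  -- integration by parts: ∫ deriv (x χ ψ²) = 0
  set F : ℝ → ℝ := fun x => x * χ x * ψ x ^ 2 with hF
  have hFder : ∀ x, HasDerivAt F
      (χ x * ψ x ^ 2 + x * deriv χ x * ψ x ^ 2 + x * χ x * (2 * ψ x * deriv ψ x)) x := by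
    intro x
    have h1 : HasDerivAt (fun y => y * χ y) (1 * χ x + x * deriv χ x) x :=
      (hasDerivAt_id x).mul (hχd x).hasDerivAt
    have h2 : HasDerivAt (fun y => ψ y ^ 2) (2 * ψ x ^ 1 * deriv ψ x) x :=
      (hψd x).hasDerivAt.pow 2
    have : HasDerivAt (fun y => y * χ y * ψ y ^ 2)
        ((1 * χ x + x * deriv χ x) * ψ x ^ 2 + x * χ x * (2 * ψ x ^ 1 * deriv ψ x)) x :=
      h1.mul h2
    convert this using 1
    ring
  have hF1 : ContDiff ℝ 1 F :=
    ((contDiff_id.mul (hχ.of_le (by simp))).mul ((hψ.of_le (by simp)).pow 2))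
  have hFc : HasCompactSupport F := hCS F (fun x h => by simp [F, h])
  have hFd : deriv F = fun x =>
      χ x * ψ x ^ 2 + x * deriv χ x * ψ x ^ 2 + x * χ x * (2 * ψ x * deriv ψ x) :=
    funext fun x => (hFder x).deriv
  have hizero : ∫ x, deriv F x = 0 := by
    have hi : Integrable (deriv F) := by
      rw [hFd]; exact (int1.add int2).add int3
    have h1 := hFc.integral_Iic_deriv_eq hF1 0
    have h2 := hFc.integral_Ioi_deriv_eq hF1 0
    rw [← intervalIntegral.integral_Iic_add_Ioi hi.integrableOn hi.integrableOn, h1, h2]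
    ring
  have hsplit : (∫ x, χ x * ψ x ^ 2) =
      -(∫ x, x * deriv χ x * ψ x ^ 2) - ∫ x, x * χ x * (2 * ψ x * deriv ψ x) := by
    have h0 : (∫ x, (χ x * ψ x ^ 2 + x * deriv χ x * ψ x ^ 2) +
        x * χ x * (2 * ψ x * deriv ψ x)) = 0 := by
      rw [← hizero, hFd]
    rw [integral_add int12 int3, integral_add int1 int2] at h0
    linarith
  -- bound the χ' term
  have hI1 : |∫ x, x * deriv χ x * ψ x ^ 2| ≤ |Cb| * D := by
    calc |∫ x, x * deriv χ x * ψ x ^ 2| ≤ ∫ x, |x * deriv χ x * ψ x ^ 2| := habsint _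
      _ ≤ ∫ x, |Cb| * (x ^ 2 * χt x * ψ x ^ 2) := by
          refine integral_mono int2.abs (intD.const_mul _) fun x => ?_
          have h1 := hCb x
          have hnn : (0:ℝ) ≤ x ^ 2 * χt x := mul_nonneg (sq_nonneg x) (hχt01 x).1
          have h2 : Cb * x ^ 2 * χt x ≤ |Cb| * (x ^ 2 * χt x) := by
            calc Cb * x ^ 2 * χt x = Cb * (x ^ 2 * χt x) := by ring
              _ ≤ |Cb| * (x ^ 2 * χt x) :=
                  mul_le_mul_of_nonneg_right (le_abs_self Cb) hnn
          have h3 : |x * deriv χ x| * ψ x ^ 2 ≤ |Cb| * (x ^ 2 * χt x) * ψ x ^ 2 :=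
            mul_le_mul_of_nonneg_right (h1.trans h2) (sq_nonneg _)
          calc |x * deriv χ x * ψ x ^ 2| = |x * deriv χ x| * ψ x ^ 2 := by
                rw [abs_mul, abs_of_nonneg (sq_nonneg (ψ x))]
            _ ≤ |Cb| * (x ^ 2 * χt x) * ψ x ^ 2 := h3
            _ = |Cb| * (x ^ 2 * χt x * ψ x ^ 2) := by ring
      _ = |Cb| * D := by rw [integral_const_mul]
  -- Cauchy-Schwarz for the main term
  have hCS2 : |∫ x, x * χ x * (2 * ψ x * deriv ψ x)| ≤ 2 * (Real.sqrt A * Real.sqrt B) := by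
    set f : ℝ → ℝ := fun x => |x| * Real.sqrt (χ x) * |ψ x| with hf
    set g : ℝ → ℝ := fun x => Real.sqrt (χ x) * |deriv ψ x| with hg
    have hfc : Continuous f := ((continuous_abs).mul (hχc.sqrt)).mul (hψcont.abs)
    have hgc : Continuous g := (hχc.sqrt).mul (hψ'c.abs)
    have hfm : MemLp f (ENNReal.ofReal 2) :=
      hfc.memLp_of_hasCompactSupport (hCS f (fun x h => by simp [f, h]))
    have hgm : MemLp g (ENNReal.ofReal 2) :=
      hgc.memLp_of_hasCompactSupport (hCS' g (fun x h => by simp [g, h]))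
    have hconj : (2:ℝ).HolderConjugate 2 := Real.HolderConjugate.two_two
    have key := integral_mul_le_Lp_mul_Lq_of_nonneg hconj
      (Filter.Eventually.of_forall fun x => by positivity)
      (Filter.Eventually.of_forall fun x => by positivity) hfm hgm
    have hfg : ∀ x, f x * g x = |x * χ x * (2 * ψ x * deriv ψ x)| / 2 := by
      intro x
      have h0 := (hχ01 x).1
      have hss : Real.sqrt (χ x) * Real.sqrt (χ x) = χ x := Real.mul_self_sqrt h0
      have hrhs : |x * χ x * (2 * ψ x * deriv ψ x)| =
          2 * (|x| * χ x * (|ψ x| * |deriv ψ x|)) := by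
        rw [abs_mul, abs_mul, abs_mul, abs_mul, abs_of_nonneg h0,
          abs_of_nonneg (by norm_num : (0:ℝ) ≤ 2)]
        ring
      have hlhs : (|x| * Real.sqrt (χ x) * |ψ x|) * (Real.sqrt (χ x) * |deriv ψ x|) =
          |x| * (Real.sqrt (χ x) * Real.sqrt (χ x)) * (|ψ x| * |deriv ψ x|) := by ring
      simp only [f, g]
      rw [hlhs, hss, hrhs]
      ring
    have hf2 : ∀ x, f x ^ (2:ℝ) = x ^ 2 * χ x * ψ x ^ 2 := by
      intro x
      have h0 := (hχ01 x).1
      rw [show ((2:ℝ)) = ((2:ℕ):ℝ) by norm_num, Real.rpow_natCast]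
      simp only [f]
      rw [mul_pow, mul_pow, sq_abs, sq_abs, Real.sq_sqrt h0]
    have hg2 : ∀ x, g x ^ (2:ℝ) = χ x * (deriv ψ x) ^ 2 := by
      intro x
      have h0 := (hχ01 x).1
      rw [show ((2:ℝ)) = ((2:ℕ):ℝ) by norm_num, Real.rpow_natCast]
      simp only [g]
      rw [mul_pow, sq_abs, Real.sq_sqrt h0]
    rw [integral_congr_ae (Filter.Eventually.of_forall hf2),
        integral_congr_ae (Filter.Eventually.of_forall hg2),
        integral_congr_ae (Filter.Eventually.of_forall hfg)] at key
    rw [← Real.sqrt_eq_rpow, ← Real.sqrt_eq_rpow] at key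
    have habs : |∫ x, x * χ x * (2 * ψ x * deriv ψ x)| ≤
        ∫ x, |x * χ x * (2 * ψ x * deriv ψ x)| := habsint _
    have hdiv : (∫ x, |x * χ x * (2 * ψ x * deriv ψ x)| / 2) =
        (∫ x, |x * χ x * (2 * ψ x * deriv ψ x)|) / 2 := integral_div 2 _
    rw [hdiv] at key
    rw [← hA, ← hB] at key
    linarith
  -- pointwise domination for the χt integral
  have hTsplit : (∫ x, χt x * ψ x ^ 2) ≤ (∫ x, χ x * ψ x ^ 2) + D := by
    rw [← integral_add int1 intD]
    refine integral_mono intT (int1.add intD) fun x => ?_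
    have h1 := (hχt01 x).1
    have h2 := (hχt01 x).2
    have h3 := (hχ01 x).1
    by_cases hx : |x| ≤ 1
    · have hone : χ x = 1 := hχ1 x (abs_le.mp hx)
      have hx2 : (0:ℝ) ≤ x ^ 2 * χt x * ψ x ^ 2 := by positivity
      simp only [hone]
      nlinarith [sq_nonneg (ψ x)]
    · push_neg at hx
      have hx2 : (1:ℝ) ≤ x ^ 2 := by nlinarith [sq_abs x, abs_nonneg x]
      nlinarith [sq_nonneg (ψ x), mul_nonneg h3 (sq_nonneg (ψ x)),
        mul_nonneg h1 (sq_nonneg (ψ x))]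
  -- put everything together
  have hE : (∫ x, χ x * ψ x ^ 2) ≤ |Cb| * D + 2 * (Real.sqrt A * Real.sqrt B) := by
    rw [hsplit]
    have h1 := abs_le.mp hI1
    have h2 := abs_le.mp hCS2
    linarith [h1.1, h1.2, h2.1, h2.2]
  have hsqnn : 0 ≤ Real.sqrt A * Real.sqrt B := by positivity
  nlinarith [abs_nonneg Cb]
end

section
/- (Weighted 1-D Sobolev bound) For a C¹ function ψ on ℝ compactly supported, and any t ∈ ℝ, one has sup_{x∈ℝ} (1 + (t-|x|)²)^{1/2} ψ(x)² ≲ ∫_ℝ [(1 + (t-|x|)²)(ψ'(x))² + ψ(x)²] dx, with an absolute implicit constant. -/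
/-!
Put `g(y) = √(1 + (y - t)²)`, so that `|g'| ≤ 1` and `g² = 1 + (t - y)²`. For `x ≥ 0` the
fundamental theorem of calculus on `(x, ∞)` gives `g(x) ψ(x)² = -∫_x^∞ (g ψ²)'`, and
`|(g ψ²)'| = |g' ψ² + 2 g ψ ψ'| ≤ 2 ψ² + g² ψ'²` by AM-GM; on `(x, ∞)` we have `|y| = y`, so
this is at most twice the energy density. The case `x < 0` follows by applying this to
`y ↦ ψ(-y)`, which has the same energy.
-/

open MeasureTheory Set Filter Topology

theorem HasCompactSupport.norm_le_integral_Ioi_norm_deriv {E : Type*} [NormedAddCommGroup E]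
    [NormedSpace ℝ E] [CompleteSpace E] {f : ℝ → E} (hf : ContDiff ℝ 1 f)
    (h2f : HasCompactSupport f) (a : ℝ) :
    ‖f a‖ ≤ ∫ x in Ioi a, ‖deriv f x‖ :=
  calc ‖f a‖ = ‖∫ x in Ioi a, deriv f x‖ := by rw [h2f.integral_Ioi_deriv_eq hf, norm_neg]
    _ ≤ ∫ x in Ioi a, ‖deriv f x‖ := norm_integral_le_integral_norm _

theorem hasDerivAt_sqrt_one_add_sq (s : ℝ) :
    HasDerivAt (fun s => √(1 + s ^ 2)) (s / √(1 + s ^ 2)) s := by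
  convert ((hasDerivAt_pow 2 s).const_add 1).sqrt (by positivity) using 1
  ring

theorem abs_div_sqrt_one_add_sq_le_one (s : ℝ) : |s / √(1 + s ^ 2)| ≤ 1 := by
  have hpos : 0 < √(1 + s ^ 2) := by positivity
  rw [abs_div, abs_of_pos hpos, div_le_one hpos, ← Real.sqrt_sq_eq_abs]
  exact Real.sqrt_le_sqrt (by linarith)

theorem abs_mul_sq_add_mul_two_mul_le {a b p q : ℝ} (ha : |a| ≤ 1) :
    |a * p ^ 2 + b * (2 * p * q)| ≤ 2 * p ^ 2 + b ^ 2 * q ^ 2 :=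
  calc |a * p ^ 2 + b * (2 * p * q)| ≤ |a * p ^ 2| + |b * (2 * p * q)| := abs_add_le _ _
    _ ≤ p ^ 2 + (p ^ 2 + b ^ 2 * q ^ 2) := by
      gcongr
      · rw [abs_mul, abs_of_nonneg (sq_nonneg p)]
        exact mul_le_of_le_one_left (sq_nonneg p) ha
      · rw [abs_le]
        constructor <;> nlinarith [sq_nonneg (p - b * q), sq_nonneg (p + b * q)]
    _ = 2 * p ^ 2 + b ^ 2 * q ^ 2 := by ring

noncomputable def weightedEnergy (t : ℝ) (ψ : ℝ → ℝ) : ℝ :=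
  ∫ y, ((1 + (t - |y|) ^ 2) * (deriv ψ y) ^ 2 + ψ y ^ 2)

theorem weightedEnergy_comp_neg (t : ℝ) (ψ : ℝ → ℝ) :
    weightedEnergy t (fun y => ψ (-y)) = weightedEnergy t ψ := by
  simp only [weightedEnergy, deriv_comp_neg, neg_sq]
  simpa only [abs_neg] using
    integral_neg_eq_self (fun y => (1 + (t - |y|) ^ 2) * (deriv ψ y) ^ 2 + ψ y ^ 2) volume

theorem integrable_weightedEnergy_density {ψ : ℝ → ℝ} (hψ : ContDiff ℝ 1 ψ)
    (hc : HasCompactSupport ψ) (t : ℝ) :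
    Integrable fun y => (1 + (t - |y|) ^ 2) * (deriv ψ y) ^ 2 + ψ y ^ 2 := by
  have := hψ.continuous
  have := hψ.continuous_deriv le_rfl
  refine Continuous.integrable_of_hasCompactSupport (by fun_prop) (HasCompactSupport.add ?_ ?_)
  · exact hc.deriv.mono fun y hy h0 => hy (by simp [h0])
  · exact hc.mono fun y hy h0 => hy (by simp [h0])

theorem sqrt_mul_sq_le_two_mul_weightedEnergy {ψ : ℝ → ℝ} (hψ : ContDiff ℝ 1 ψ)
    (hc : HasCompactSupport ψ) (t : ℝ) {x : ℝ} (hx : 0 ≤ x) :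
    √(1 + (t - |x|) ^ 2) * ψ x ^ 2 ≤ 2 * weightedEnergy t ψ := by
  set g : ℝ → ℝ := fun y => √(1 + (y - t) ^ 2)
  set G : ℝ → ℝ := fun y => g y * ψ y ^ 2
  have hg : ContDiff ℝ 1 g := (contDiff_const.add ((contDiff_id.sub contDiff_const).pow 2)).sqrt
    fun y => by positivity
  have hG : ContDiff ℝ 1 G := hg.mul (hψ.pow 2)
  have hGc : HasCompactSupport G := hc.mono fun y hy h0 => hy (by simp [G, h0])
  have hderiv : ∀ y, deriv G y = (y - t) / g y * ψ y ^ 2 + g y * (2 * ψ y * deriv ψ y) := by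
    intro y
    have hψ2 : HasDerivAt (fun y => ψ y ^ 2) (2 * ψ y * deriv ψ y) y := by
      simpa using (hψ.differentiable one_ne_zero y).hasDerivAt.fun_pow 2
    exact (((hasDerivAt_sqrt_one_add_sq (y - t)).comp_sub_const y t).mul hψ2).deriv
  have hbound : ∀ y ∈ Ioi x,
      ‖deriv G y‖ ≤ 2 * ((1 + (t - |y|) ^ 2) * (deriv ψ y) ^ 2 + ψ y ^ 2) := by
    intro y hy
    have hgsq : g y ^ 2 = 1 + (t - |y|) ^ 2 := by
      rw [Real.sq_sqrt (by positivity), abs_of_pos (hx.trans_lt hy), sub_sq_comm]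
    rw [Real.norm_eq_abs, hderiv]
    refine (abs_mul_sq_add_mul_two_mul_le (abs_div_sqrt_one_add_sq_le_one (y - t))).trans ?_
    rw [hgsq]
    nlinarith [sq_nonneg (ψ y)]
  have hGderiv_int : Integrable fun y => ‖deriv G y‖ :=
    ((hG.continuous_deriv le_rfl).integrable_of_hasCompactSupport hGc.deriv).norm
  have hF := (integrable_weightedEnergy_density hψ hc t).const_mul 2
  calc √(1 + (t - |x|) ^ 2) * ψ x ^ 2 = ‖G x‖ := by
        rw [Real.norm_of_nonneg (by positivity), abs_of_nonneg hx, sub_sq_comm]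
    _ ≤ ∫ y in Ioi x, ‖deriv G y‖ := hGc.norm_le_integral_Ioi_norm_deriv hG x
    _ ≤ ∫ y in Ioi x, 2 * ((1 + (t - |y|) ^ 2) * (deriv ψ y) ^ 2 + ψ y ^ 2) :=
        setIntegral_mono_on hGderiv_int.integrableOn hF.integrableOn measurableSet_Ioi hbound
    _ ≤ ∫ y, 2 * ((1 + (t - |y|) ^ 2) * (deriv ψ y) ^ 2 + ψ y ^ 2) :=
        setIntegral_le_integral hF (Eventually.of_forall fun y => by positivity)
    _ = 2 * weightedEnergy t ψ := integral_const_mul _ _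

/-- Weighted 1-D Sobolev bound: for `ψ ∈ C_c¹(ℝ)` and any `t`,
`sup_x (1+(t-|x|)²)^{1/2} ψ(x)² ≲ ∫ (1+(t-|x|)²)(ψ')² + ψ² dx`
with an absolute constant. -/
theorem weighted_sobolev_1d :
    ∃ C : ℝ, 0 < C ∧ ∀ ψ : ℝ → ℝ, ContDiff ℝ 1 ψ → HasCompactSupport ψ →
      ∀ t x : ℝ,
      Real.sqrt (1 + (t - |x|) ^ 2) * ψ x ^ 2 ≤
        C * ∫ y, ((1 + (t - |y|) ^ 2) * (deriv ψ y) ^ 2 + ψ y ^ 2) := by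
  refine ⟨2, two_pos, fun ψ hψ hc t x => ?_⟩
  rcases le_or_gt 0 x with hx | hx
  · exact sqrt_mul_sq_le_two_mul_weightedEnergy hψ hc t hx
  · have h := sqrt_mul_sq_le_two_mul_weightedEnergy (ψ := fun y => ψ (-y))
      (hψ.comp contDiff_neg) (hc.comp_homeomorph (Homeomorph.neg ℝ)) t (neg_nonneg.mpr hx.le)
    rwa [weightedEnergy_comp_neg, abs_neg, neg_neg] at h
end
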